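/- arXiv:1507.02769 — 4 statements merged into one kernel-verified Lean document; each statement's English description precedes it below -/
import Mathlib

section
/- A statistic ĝ(X) with finite second moments under every P_θ is a UMVUE of its expectation if and only if E_θ[ĝ(X)·χ(X)] = 0 for every θ ∈ Θ and every statistic χ(X) with E_θ χ(X) = 0 and E_θ|χ(X)|² < ∞ for all θ ∈ Θ. -/
open MeasureTheory ProbabilityTheory

/-- `χ` is a square-integrable unbiased estimator of zero for the family `P`. -/
def IsUEZero {𝓧 Θ : Type*} [MeasurableSpace 𝓧] (P : Θ → Measure 𝓧) (χ : 𝓧 → ℝ) : Prop :=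
  Measurable χ ∧ (∀ θ, MemLp χ 2 (P θ)) ∧ ∀ θ, ∫ x, χ x ∂P θ = 0

/-- `g` is a UMVUE: minimal variance at every `θ` among all unbiased estimators
(with finite second moments) of the same parametric function. -/
def IsUMVUE {𝓧 Θ : Type*} [MeasurableSpace 𝓧] (P : Θ → Measure 𝓧) (g : 𝓧 → ℝ) : Prop :=
  Measurable g ∧ (∀ θ, MemLp g 2 (P θ)) ∧
    ∀ g' : 𝓧 → ℝ, Measurable g' → (∀ θ, MemLp g' 2 (P θ)) →
      (∀ θ, ∫ x, g' x ∂P θ = ∫ x, g x ∂P θ) →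
      ∀ θ, variance g (P θ) ≤ variance g' (P θ)

/-!
For an unbiased estimator of zero `χ` and `c : ℝ`, the estimator `g + c χ` is unbiased for the same
function and `Var (g + c χ) = Var g + 2 c E[g χ] + c² Var χ`, since `Cov(g, χ) = E[g χ]`. If `g` has
minimal variance, this quadratic in `c` is minimal at `c = 0`, which forces `E[g χ] = 0`.
Conversely every unbiased competitor is `g' = g + (g' - g)`, so if `E[g χ] = 0` for all such `χ`
then `Var g' = Var g + Var (g' - g) ≥ Var g`.
-/

lemma eq_zero_of_forall_nonneg_two_mul_add_sq_mul {a b : ℝ}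
    (h : ∀ c : ℝ, 0 ≤ 2 * c * a + c ^ 2 * b) : a = 0 := by
  have hdiscrim := discrim_le_zero (a := b) (b := 2 * a) (c := 0) fun c => by
    linarith [h c]
  rw [discrim] at hdiscrim
  nlinarith [sq_nonneg a]

section Variance

variable {𝓧 : Type*} [MeasurableSpace 𝓧] {μ : Measure 𝓧} [IsProbabilityMeasure μ] {g χ : 𝓧 → ℝ}

lemma covariance_eq_integral_mul_of_integral_eq_zero (hg : MemLp g 2 μ) (hχ : MemLp χ 2 μ)
    (hχ0 : ∫ x, χ x ∂μ = 0) : cov[g, χ; μ] = ∫ x, g x * χ x ∂μ := by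
  rw [covariance_eq_sub hg hχ, hχ0, mul_zero, sub_zero]
  rfl

lemma variance_add_of_integral_eq_zero (hg : MemLp g 2 μ) (hχ : MemLp χ 2 μ)
    (hχ0 : ∫ x, χ x ∂μ = 0) :
    Var[fun x => g x + χ x; μ] = Var[g; μ] + 2 * ∫ x, g x * χ x ∂μ + Var[χ; μ] := by
  rw [variance_fun_add hg hχ, covariance_eq_integral_mul_of_integral_eq_zero hg hχ hχ0]

end Variance

section Estimators

variable {𝓧 Θ : Type*} [MeasurableSpace 𝓧] {P : Θ → Measure 𝓧} {g g' χ : 𝓧 → ℝ}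

lemma IsUEZero.const_mul (hχ : IsUEZero P χ) (c : ℝ) : IsUEZero P (fun x => c * χ x) :=
  ⟨hχ.1.const_mul c, fun θ => (hχ.2.1 θ).const_mul c,
    fun θ => by rw [integral_const_mul, hχ.2.2 θ, mul_zero]⟩

variable [∀ θ, IsProbabilityMeasure (P θ)]

lemma IsUEZero.integral_add_eq (hχ : IsUEZero P χ) (hg : ∀ θ, MemLp g 2 (P θ)) (θ : Θ) :
    ∫ x, (g x + χ x) ∂P θ = ∫ x, g x ∂P θ := by
  rw [integral_add ((hg θ).integrable one_le_two) ((hχ.2.1 θ).integrable one_le_two),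
    hχ.2.2 θ, add_zero]

lemma isUEZero_sub (hg' : Measurable g') (hg'2 : ∀ θ, MemLp g' 2 (P θ)) (hg : Measurable g)
    (hg2 : ∀ θ, MemLp g 2 (P θ)) (hmean : ∀ θ, ∫ x, g' x ∂P θ = ∫ x, g x ∂P θ) :
    IsUEZero P (fun x => g' x - g x) :=
  ⟨hg'.sub hg, fun θ => (hg'2 θ).sub (hg2 θ), fun θ => by
    rw [integral_sub ((hg'2 θ).integrable one_le_two) ((hg2 θ).integrable one_le_two),
      hmean θ, sub_self]⟩

lemma IsUMVUE.integral_mul_eq_zero (hg : IsUMVUE P g) (hχ : IsUEZero P χ) (θ : Θ) :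
    ∫ x, g x * χ x ∂P θ = 0 := by
  obtain ⟨hgm, hg2, hmin⟩ := hg
  refine eq_zero_of_forall_nonneg_two_mul_add_sq_mul (b := Var[χ; P θ]) fun c => ?_
  have hcχ := hχ.const_mul c
  have hle := hmin (fun x => g x + c * χ x) (hgm.add hcχ.1) (fun θ => (hg2 θ).add (hcχ.2.1 θ))
    (hcχ.integral_add_eq hg2) θ
  rw [variance_add_of_integral_eq_zero (hg2 θ) (hcχ.2.1 θ) (hcχ.2.2 θ), variance_const_mul] at hle
  simp only [mul_left_comm _ c, integral_const_mul] at hle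
  linarith

lemma isUMVUE_of_forall_integral_mul_eq_zero (hg : Measurable g) (hg2 : ∀ θ, MemLp g 2 (P θ))
    (h : ∀ χ : 𝓧 → ℝ, IsUEZero P χ → ∀ θ, ∫ x, g x * χ x ∂P θ = 0) : IsUMVUE P g := by
  refine ⟨hg, hg2, fun g' hg' hg'2 hmean θ => ?_⟩
  have hχ := isUEZero_sub hg' hg'2 hg hg2 hmean
  have hvar := variance_add_of_integral_eq_zero (hg2 θ) (hχ.2.1 θ) (hχ.2.2 θ)
  simp only [add_sub_cancel] at hvar
  rw [hvar, h _ hχ θ]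
  linarith [variance_nonneg (fun x => g' x - g x) (P θ)]

end Estimators

theorem stmt1 {𝓧 Θ : Type*} [MeasurableSpace 𝓧] (P : Θ → Measure 𝓧)
    [∀ θ, IsProbabilityMeasure (P θ)] (g : 𝓧 → ℝ)
    (hg : Measurable g) (hg2 : ∀ θ, MemLp g 2 (P θ)) :
    IsUMVUE P g ↔ ∀ χ : 𝓧 → ℝ, IsUEZero P χ → ∀ θ, ∫ x, g x * χ x ∂P θ = 0 := by
  exact ⟨fun h χ hχ θ => h.integral_mul_eq_zero hχ θ,
    isUMVUE_of_forall_integral_mul_eq_zero hg hg2⟩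
end

section
/- If Â₁ and Â₂ are MVE-algebras for the model (𝒳, 𝒜, 𝒫), then Â = σ(Â₁, Â₂), the smallest σ-algebra containing both, is also an MVE-algebra. -/
open MeasureTheory ProbabilityTheory

/-- A sub-σ-algebra `𝓐` of the basic σ-algebra `m` is an MVE-algebra for the family `P`
if every `𝓐`-measurable statistic with finite second moments under every `P θ`
is a UMVUE of its expectation. -/
def IsMVEAlgebra {𝓧 Θ : Type*} [m : MeasurableSpace 𝓧] (P : Θ → Measure 𝓧)
    (𝓐 : MeasurableSpace 𝓧) : Prop :=
  𝓐 ≤ m ∧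
    ∀ g : 𝓧 → ℝ, Measurable[𝓐] g → (∀ θ, MemLp g 2 (P θ)) → @IsUMVUE 𝓧 Θ m P g

/-
A statistic is a UMVUE exactly when, under every `P θ`, it is orthogonal to all square-integrable
unbiased estimators of zero: perturbing `ĝ` to `ĝ + t χ` changes its variance by
`2 t E[ĝ χ] + t² Var χ`. If `Â` is an MVE-algebra and `χ` estimates zero unbiasedly, then so does
`1_A χ` for every `A ∈ Â`, since `1_A` is `Â`-measurable. Applying this with `Â₁` and then `Â₂`
gives `∫_{A₁ ∩ A₂} χ dP_θ = 0`; such intersections form a π-system generating `σ(Â₁, Â₂)`, so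
`χ` integrates to zero over every set of `σ(Â₁, Â₂)`, i.e. `E_θ[χ | σ(Â₁, Â₂)] = 0`, and every
`σ(Â₁, Â₂)`-measurable `ĝ` is orthogonal to `χ`.
-/

open Set

theorem IsPiSystem.image2_inter {α : Type*} {S T : Set (Set α)} (hS : IsPiSystem S)
    (hT : IsPiSystem T) :
    IsPiSystem (image2 (· ∩ ·) S T) := by
  rintro _ ⟨s₁, hs₁, t₁, ht₁, rfl⟩ _ ⟨s₂, hs₂, t₂, ht₂, rfl⟩ hne
  refine ⟨s₁ ∩ s₂, hS _ hs₁ _ hs₂ (hne.mono ?_), t₁ ∩ t₂, hT _ ht₁ _ ht₂ (hne.mono ?_), ?_⟩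
  · exact fun x hx => ⟨hx.1.1, hx.2.1⟩
  · exact fun x hx => ⟨hx.1.2, hx.2.2⟩
  · exact inter_inter_inter_comm s₁ s₂ t₁ t₂

namespace MeasurableSpace

theorem generateFrom_image2_inter_measurableSet {α : Type*} (m₁ m₂ : MeasurableSpace α) :
    generateFrom (image2 (· ∩ ·) {s | MeasurableSet[m₁] s} {s | MeasurableSet[m₂] s}) =
      m₁ ⊔ m₂ := by
  refine le_antisymm (generateFrom_le ?_) (sup_le (fun s hs => ?_) (fun s hs => ?_))
  · rintro _ ⟨s, hs, t, ht, rfl⟩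
    exact (le_sup_left (b := m₂) s hs).inter (le_sup_right (a := m₁) t ht)
  · exact measurableSet_generateFrom ⟨s, hs, univ, .univ, inter_univ s⟩
  · exact measurableSet_generateFrom ⟨univ, .univ, s, hs, univ_inter s⟩

end MeasurableSpace

namespace MeasureTheory

variable {α : Type*} {m m₀ : MeasurableSpace α} {μ : Measure[m₀] α}

theorem setIntegral_eq_zero_of_isPiSystem {E : Type*} [NormedAddCommGroup E] [NormedSpace ℝ E]
    (hm : m ≤ m₀) {f : α → E} (hf : Integrable f μ)
    {S : Set (Set α)} (h_eq : m = MeasurableSpace.generateFrom S) (h_inter : IsPiSystem S)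
    (h_univ : ∫ x, f x ∂μ = 0) (basic : ∀ s ∈ S, ∫ x in s, f x ∂μ = 0) {s : Set α}
    (hs : MeasurableSet[m] s) : ∫ x in s, f x ∂μ = 0 := by
  induction s, hs using MeasurableSpace.induction_on_inter h_eq h_inter with
  | empty => simp
  | basic t ht => exact basic t ht
  | compl t ht iht => rw [setIntegral_compl (hm t ht) hf, h_univ, iht, sub_zero]
  | iUnion t htd ht iht =>
    rw [integral_iUnion (fun i => hm _ (ht i)) htd hf.integrableOn]
    simp [iht]

theorem integral_mul_eq_zero_of_forall_setIntegral_eq_zero (hm : m ≤ m₀) [IsFiniteMeasure μ]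
    {f g : α → ℝ} (hg : StronglyMeasurable[m] g) (hgf : Integrable (g * f) μ)
    (hf : Integrable f μ) (h : ∀ s, MeasurableSet[m] s → ∫ x in s, f x ∂μ = 0) :
    ∫ x, g x * f x ∂μ = 0 := by
  have hf_condExp : 0 =ᵐ[μ] μ[f | m] :=
    ae_eq_condExp_of_forall_setIntegral_eq hm hf (fun _ _ _ => integrableOn_zero)
      (fun s hs _ => by simp [h s hs]) aestronglyMeasurable_const
  calc ∫ x, g x * f x ∂μ = ∫ x, (μ[g * f | m]) x ∂μ := (integral_condExp hm).symm
    _ = ∫ x, g x * (μ[f | m]) x ∂μ :=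
      integral_congr_ae (condExp_mul_of_stronglyMeasurable_left hg hgf hf)
    _ = 0 := by
      rw [integral_congr_ae (hf_condExp.mono fun x hx => show g x * (μ[f | m]) x = 0 by
        simp [← hx])]
      simp

end MeasureTheory

theorem ProbabilityTheory.variance_add_smul_of_integral_eq_zero {Ω : Type*} [MeasurableSpace Ω]
    {μ : Measure Ω} [IsProbabilityMeasure μ] {X Y : Ω → ℝ} (hX : MemLp X 2 μ)
    (hY : MemLp Y 2 μ) (hY₀ : ∫ ω, Y ω ∂μ = 0) (t : ℝ) :
    Var[X + t • Y; μ] = Var[X; μ] + 2 * t * ∫ ω, X ω * Y ω ∂μ + t ^ 2 * Var[Y; μ] := by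
  rw [variance_add hX (hY.const_smul t), covariance_smul_right, covariance_eq_sub hX hY,
    variance_smul, hY₀, mul_zero, sub_zero, Pi.mul_def]
  ring

section Estimation

variable {𝓧 Θ : Type*} [m : MeasurableSpace 𝓧] {P : Θ → Measure 𝓧}
  [∀ θ, IsProbabilityMeasure (P θ)]

theorem isUMVUE_iff_forall_integral_mul_eq_zero {g : 𝓧 → ℝ} (hg : Measurable g)
    (hg₂ : ∀ θ, MemLp g 2 (P θ)) :
    IsUMVUE P g ↔ ∀ χ, IsUEZero P χ → ∀ θ, ∫ x, g x * χ x ∂P θ = 0 := by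
  constructor
  · rintro ⟨-, -, hmin⟩ χ ⟨hχm, hχ₂, hχ₀⟩ θ
    have hquad (t : ℝ) : 0 ≤ Var[χ; P θ] * (t * t) + 2 * (∫ x, g x * χ x ∂P θ) * t + 0 := by
      have hmean (θ : Θ) : ∫ x, (g + t • χ) x ∂P θ = ∫ x, g x ∂P θ := by
        rw [Pi.add_def, integral_add ((hg₂ θ).integrable one_le_two)
          (((hχ₂ θ).integrable one_le_two).smul t)]
        simp [integral_const_mul, hχ₀]
      have := hmin _ (hg.add (hχm.const_smul t)) (fun θ => (hg₂ θ).add ((hχ₂ θ).const_smul t))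
        hmean θ
      rw [variance_add_smul_of_integral_eq_zero (hg₂ θ) (hχ₂ θ) (hχ₀ θ)] at this
      linarith
    have hdiscrim := discrim_le_zero hquad
    rw [discrim] at hdiscrim
    nlinarith
  · refine fun h => ⟨hg, hg₂, fun g' hg' hg'₂ hmean θ => ?_⟩
    have hχ : IsUEZero P (g' - g) := by
      refine ⟨hg'.sub hg, fun θ => (hg'₂ θ).sub (hg₂ θ), fun θ => ?_⟩
      rw [Pi.sub_def, integral_sub ((hg'₂ θ).integrable one_le_two)
        ((hg₂ θ).integrable one_le_two), hmean, sub_self]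
    have := variance_add_smul_of_integral_eq_zero (hg₂ θ) (hχ.2.1 θ) (hχ.2.2 θ) 1
    rw [one_smul, add_sub_cancel, h _ hχ θ] at this
    rw [this]
    nlinarith [variance_nonneg (g' - g) (P θ)]

end Estimation

namespace IsMVEAlgebra

-- `m` is declared after the sub-σ-algebras so that it is the instance found by default.
variable {𝓧 Θ : Type*} {𝓐 𝓐₁ 𝓐₂ : MeasurableSpace 𝓧} [m : MeasurableSpace 𝓧]
  {P : Θ → Measure 𝓧} [∀ θ, IsProbabilityMeasure (P θ)] {χ : 𝓧 → ℝ}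

theorem isUEZero_indicator (h : IsMVEAlgebra P 𝓐) (hχ : IsUEZero P χ) {A : Set 𝓧}
    (hA : MeasurableSet[𝓐] A) : IsUEZero P (A.indicator χ) := by
  have hA' : MeasurableSet A := h.1 A hA
  have hind₂ (θ : Θ) : MemLp (A.indicator 1 : 𝓧 → ℝ) 2 (P θ) := (memLp_const 1).indicator hA'
  have hind : IsUMVUE P (A.indicator 1 : 𝓧 → ℝ) :=
    h.2 _ (@measurable_one ℝ 𝓧 _ 𝓐 _ |>.indicator hA) hind₂
  refine ⟨hχ.1.indicator hA', fun θ => (hχ.2.1 θ).indicator hA', fun θ => ?_⟩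
  have := (isUMVUE_iff_forall_integral_mul_eq_zero (measurable_one.indicator hA') hind₂).1
    hind χ hχ θ
  simpa only [← indicator_mul_left, Pi.one_apply, one_mul] using this

theorem setIntegral_eq_zero_of_measurableSet_sup (h₁ : IsMVEAlgebra P 𝓐₁)
    (h₂ : IsMVEAlgebra P 𝓐₂) (hχ : IsUEZero P χ) (θ : Θ) {A : Set 𝓧}
    (hA : MeasurableSet[𝓐₁ ⊔ 𝓐₂] A) : ∫ x in A, χ x ∂P θ = 0 := by
  refine setIntegral_eq_zero_of_isPiSystem (sup_le h₁.1 h₂.1) ((hχ.2.1 θ).integrable one_le_two)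
    (MeasurableSpace.generateFrom_image2_inter_measurableSet 𝓐₁ 𝓐₂).symm
    ((@MeasurableSpace.isPiSystem_measurableSet _ 𝓐₁).image2_inter
      (@MeasurableSpace.isPiSystem_measurableSet _ 𝓐₂)) (hχ.2.2 θ) ?_ hA
  rintro _ ⟨A₁, hA₁, A₂, hA₂, rfl⟩
  have := (h₂.isUEZero_indicator (h₁.isUEZero_indicator hχ hA₁) hA₂).2.2 θ
  rwa [indicator_indicator, integral_indicator ((h₂.1 _ hA₂).inter (h₁.1 _ hA₁)),
    inter_comm] at this

end IsMVEAlgebra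

theorem stmt6 {𝓧 Θ : Type*} [m : MeasurableSpace 𝓧]
    (P : Θ → Measure 𝓧) [∀ θ, IsProbabilityMeasure (P θ)]
    (𝓐₁ 𝓐₂ : MeasurableSpace 𝓧)
    (h₁ : @IsMVEAlgebra 𝓧 Θ m P 𝓐₁) (h₂ : @IsMVEAlgebra 𝓧 Θ m P 𝓐₂) :
    @IsMVEAlgebra 𝓧 Θ m P (𝓐₁ ⊔ 𝓐₂) := by
  have hle : 𝓐₁ ⊔ 𝓐₂ ≤ m := sup_le h₁.1 h₂.1
  refine ⟨hle, fun g hg hg₂ => ?_⟩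
  refine (isUMVUE_iff_forall_integral_mul_eq_zero (m := m) (hg.mono hle le_rfl) hg₂).2
    fun χ hχ θ => ?_
  exact integral_mul_eq_zero_of_forall_setIntegral_eq_zero hle hg.stronglyMeasurable
    ((hg₂ θ).integrable_mul (hχ.2.1 θ)) ((hχ.2.1 θ).integrable one_le_two)
    fun _ hs => h₁.setIntegral_eq_zero_of_measurableSet_sup (m := m) h₂ hχ θ hs
end

section
/- In the product model, if Âᵢ ⊆ 𝒜ᵢ is an MVE-algebra for (𝒳ᵢ, 𝒜ᵢ, {P_{θᵢ}}) for i = 1, 2, then the product σ-algebra Â₁ ⊗ Â₂ is an MVE-algebra for the product family {P_{θ₁} × P_{θ₂} : (θ₁, θ₂) ∈ Θ₁ × Θ₂}. -/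
/-!
A statistic is a UMVUE exactly when it is uncorrelated with every square-integrable unbiased
estimator of zero `χ`. On the product, for `A₁ ∈ 𝓐₁` the function `x₂ ↦ ∫_{A₁} χ(x₁, x₂) dP₁ θ₁`
is an unbiased estimator of zero in the second model: its `P₂ θ₂`-mean is `∫_{A₁} u dP₁ θ₁` with
`u = ∫ χ(·, x₂) dP₂ θ₂` an unbiased estimator of zero in the first model, orthogonal to `1_{A₁}`.
Orthogonality to `1_{A₂}` then gives `∫_{A₁ × A₂} χ = 0` on rectangles, hence, by a π-λ argument,
on every set of `𝓐₁ ⊗ 𝓐₂`. So the conditional expectation of `χ` given `𝓐₁ ⊗ 𝓐₂` vanishes, and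
every `𝓐₁ ⊗ 𝓐₂`-measurable statistic is uncorrelated with `χ`.
-/

open MeasureTheory ProbabilityTheory

section Orthogonality

variable {𝓧 Θ : Type*} {𝓐 : MeasurableSpace 𝓧} [MeasurableSpace 𝓧] {P : Θ → Measure 𝓧}
  [∀ θ, IsProbabilityMeasure (P θ)] {g χ : 𝓧 → ℝ}

lemma IsUEZero.covariance_eq_integral_mul (hχ : IsUEZero P χ) {θ : Θ} (hg : MemLp g 2 (P θ)) :
    cov[g, χ; P θ] = ∫ x, g x * χ x ∂P θ := by
  rw [covariance_eq_sub hg (hχ.2.1 θ), hχ.2.2 θ, mul_zero, sub_zero]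
  rfl

/-- The quadratic `t ↦ Var[g + t • χ] - Var[g] = 2 t cov[g, χ] + t² Var[χ]` is nonnegative,
since `g + t • χ` is unbiased for the same function as `g`; so its discriminant vanishes. -/
lemma IsUMVUE.covariance_eq_zero (hg : IsUMVUE P g) (hχ : IsUEZero P χ) (θ : Θ) :
    cov[g, χ; P θ] = 0 := by
  obtain ⟨hg_meas, hg2, hmin⟩ := hg
  obtain ⟨hχ_meas, hχ2, hχ0⟩ := hχ
  have hquad : ∀ t : ℝ, 0 ≤ Var[χ; P θ] * (t * t) + 2 * cov[g, χ; P θ] * t + 0 := fun t => by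
    have hmean : ∀ θ', ∫ x, (g + t • χ) x ∂P θ' = ∫ x, g x ∂P θ' := fun θ' => by
      rw [integral_add' ((hg2 θ').integrable one_le_two)
        (((hχ2 θ').const_smul t).integrable one_le_two)]
      simp only [Pi.smul_apply, integral_smul, hχ0 θ', smul_zero, add_zero]
    have hvar := hmin (g + t • χ) (hg_meas.add (hχ_meas.const_smul t))
      (fun θ' => (hg2 θ').add ((hχ2 θ').const_smul t)) hmean θ
    rw [variance_add (hg2 θ) ((hχ2 θ).const_smul t), covariance_smul_right, variance_smul]
      at hvar
    linarith
  have hdiscr := discrim_le_zero hquad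
  rw [discrim] at hdiscr
  exact pow_eq_zero_iff two_ne_zero |>.mp (le_antisymm (by nlinarith) (sq_nonneg _))

lemma isUMVUE_of_forall_covariance_eq_zero (hg_meas : Measurable g)
    (hg2 : ∀ θ, MemLp g 2 (P θ)) (horth : ∀ χ, IsUEZero P χ → ∀ θ, cov[g, χ; P θ] = 0) :
    IsUMVUE P g := by
  refine ⟨hg_meas, hg2, fun g' hg'_meas hg'2 hmean θ => ?_⟩
  have hdiff : IsUEZero P (g' - g) := ⟨hg'_meas.sub hg_meas, fun θ => (hg'2 θ).sub (hg2 θ),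
    fun θ => by
      rw [integral_sub' ((hg'2 θ).integrable one_le_two) ((hg2 θ).integrable one_le_two),
        hmean θ, sub_self]⟩
  calc Var[g; P θ]
      ≤ Var[g; P θ] + 2 * cov[g, g' - g; P θ] + Var[g' - g; P θ] := by
        rw [horth _ hdiff θ]
        linarith [variance_nonneg (g' - g) (P θ)]
    _ = Var[g'; P θ] := by rw [← variance_add (hg2 θ) (hdiff.2.1 θ), add_sub_cancel]

lemma IsMVEAlgebra.setIntegral_eq_zero (h : IsMVEAlgebra P 𝓐) (hχ : IsUEZero P χ) {A : Set 𝓧}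
    (hA : MeasurableSet[𝓐] A) (θ : Θ) :
    ∫ x in A, χ x ∂P θ = 0 := by
  have hA' : MeasurableSet A := h.1 A hA
  have hind2 : ∀ θ, MemLp (A.indicator (1 : 𝓧 → ℝ)) 2 (P θ) := fun θ =>
    (memLp_const 1).indicator hA'
  have hind_meas : Measurable[𝓐] (A.indicator (1 : 𝓧 → ℝ)) :=
    (@measurable_one ℝ 𝓧 _ 𝓐 _).indicator hA
  have horth := (h.2 _ hind_meas hind2).covariance_eq_zero hχ θ
  rw [hχ.covariance_eq_integral_mul (hind2 θ)] at horth
  rw [← integral_indicator hA', ← horth]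
  congr with x
  by_cases hx : x ∈ A <;> simp [hx]

end Orthogonality

section Integration

variable {α β : Type*}

lemma sq_lintegral_le_measure_univ_mul_lintegral_sq [MeasurableSpace α] (μ : Measure α)
    {f : α → ENNReal} (hf : AEMeasurable f μ) :
    (∫⁻ x, f x ∂μ) ^ 2 ≤ μ Set.univ * ∫⁻ x, f x ^ 2 ∂μ := by
  have hholder := ENNReal.lintegral_mul_le_Lp_mul_Lq μ Real.HolderConjugate.two_two hf
    (aemeasurable_const (b := (1 : ENNReal)))
  simp only [Pi.mul_apply, mul_one, ENNReal.one_rpow, lintegral_const, one_mul] at hholder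
  calc (∫⁻ x, f x ∂μ) ^ 2
      ≤ ((∫⁻ x, f x ^ 2 ∂μ) ^ (1 / 2 : ℝ) * μ Set.univ ^ (1 / 2 : ℝ)) ^ 2 :=
        pow_le_pow_left' hholder 2
    _ = μ Set.univ * ∫⁻ x, f x ^ 2 ∂μ := by
        rw [← ENNReal.mul_rpow_of_nonneg _ _ (by norm_num), ← ENNReal.rpow_natCast,
          ← ENNReal.rpow_mul]
        norm_num [mul_comm]

variable [MeasurableSpace α] [MeasurableSpace β] {μ : Measure α} {ν : Measure β}
  {f : α × β → ℝ}

theorem MeasureTheory.MemLp.integral_prod_left [SFinite μ] [IsFiniteMeasure ν]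
    (hf_meas : Measurable f) (hf : MemLp f 2 (μ.prod ν)) :
    MemLp (fun x => ∫ y, f (x, y) ∂ν) 2 μ := by
  have hint_meas : StronglyMeasurable (fun x => ∫ y, f (x, y) ∂ν) :=
    hf_meas.stronglyMeasurable.integral_prod_right'
  rw [memLp_two_iff_integrable_sq hint_meas.aestronglyMeasurable]
  refine ⟨(hint_meas.measurable.pow_const 2).aestronglyMeasurable, ?_⟩
  have hfin : ∫⁻ z, ‖f z‖ₑ ^ 2 ∂(μ.prod ν) < ⊤ := by
    simpa [hasFiniteIntegral_def, enorm_pow] using hf.integrable_sq.hasFiniteIntegral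
  rw [hasFiniteIntegral_def]
  calc ∫⁻ x, ‖(∫ y, f (x, y) ∂ν) ^ 2‖ₑ ∂μ
      = ∫⁻ x, ‖∫ y, f (x, y) ∂ν‖ₑ ^ 2 ∂μ := by simp only [enorm_pow]
    _ ≤ ∫⁻ x, (∫⁻ y, ‖f (x, y)‖ₑ ∂ν) ^ 2 ∂μ :=
        lintegral_mono fun x => pow_le_pow_left' (enorm_integral_le_lintegral_enorm _) 2
    _ ≤ ∫⁻ x, ν Set.univ * ∫⁻ y, ‖f (x, y)‖ₑ ^ 2 ∂ν ∂μ :=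
        lintegral_mono fun x => sq_lintegral_le_measure_univ_mul_lintegral_sq ν
          (hf_meas.comp measurable_prodMk_left).enorm.aemeasurable
    _ = ν Set.univ * ∫⁻ z, ‖f z‖ₑ ^ 2 ∂(μ.prod ν) := by
        rw [lintegral_const_mul' _ _ (measure_ne_top ν _), lintegral_prod]
        exact (hf_meas.enorm.pow_const 2).aemeasurable
    _ < ⊤ := ENNReal.mul_lt_top (measure_lt_top ν _) hfin

theorem MeasureTheory.MemLp.integral_prod_right [IsFiniteMeasure μ] [SFinite ν]
    (hf_meas : Measurable f) (hf : MemLp f 2 (μ.prod ν)) : MemLp (fun y => ∫ x, f (x, y) ∂μ) 2 ν :=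
  MemLp.integral_prod_left (hf_meas.comp measurable_swap)
    (hf.comp_measurePreserving Measure.measurePreserving_swap)

end Integration

section SubSigmaAlgebra

variable {α : Type*} {m m₀ : MeasurableSpace α} {μ : Measure[m₀] α} {f : α → ℝ}

lemma setIntegral_eq_zero_of_isPiSystem (hm : m ≤ m₀) {C : Set (Set α)}
    (hgen : m = MeasurableSpace.generateFrom C) (hC : IsPiSystem C) (hf : Integrable f μ)
    (huniv : ∫ x, f x ∂μ = 0) (hCf : ∀ s ∈ C, ∫ x in s, f x ∂μ = 0) {s : Set α}
    (hs : MeasurableSet[m] s) : ∫ x in s, f x ∂μ = 0 := by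
  induction s, hs using MeasurableSpace.induction_on_inter hgen hC with
  | empty => simp
  | basic s hs => exact hCf s hs
  | compl s hs ihs => linarith [integral_add_compl (hm s hs) hf]
  | iUnion s hdisj hs ihs =>
    rw [integral_iUnion (fun i => hm _ (hs i)) hdisj hf.integrableOn]
    simp [ihs]

lemma integral_mul_eq_zero_of_forall_setIntegral_eq_zero [IsFiniteMeasure μ] (hm : m ≤ m₀)
    {g : α → ℝ} (hg : StronglyMeasurable[m] g) (hf : Integrable f μ)
    (hgf : Integrable (g * f) μ) (hf0 : ∀ s, MeasurableSet[m] s → ∫ x in s, f x ∂μ = 0) :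
    ∫ x, g x * f x ∂μ = 0 := by
  have hcondExp : (0 : α → ℝ) =ᵐ[μ] μ[f | m] :=
    ae_eq_condExp_of_forall_setIntegral_eq hm hf (fun _ _ _ => integrableOn_zero)
      (fun s hs _ => by simp [hf0 s hs]) stronglyMeasurable_zero.aestronglyMeasurable
  have hpull : μ[g * f | m] =ᵐ[μ] 0 := by
    filter_upwards [condExp_mul_of_stronglyMeasurable_left hg hgf hf, hcondExp] with x hx hx0
    simp [hx, ← hx0]
  calc ∫ x, g x * f x ∂μ = ∫ x, (μ[g * f | m]) x ∂μ := (integral_condExp hm).symm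
    _ = 0 := by simp [integral_congr_ae hpull]

end SubSigmaAlgebra

lemma Prod.instMeasurableSpace_mono {α β : Type*} {m₁ m₁' : MeasurableSpace α}
    {m₂ m₂' : MeasurableSpace β} (h₁ : m₁ ≤ m₁') (h₂ : m₂ ≤ m₂') :
    @Prod.instMeasurableSpace α β m₁ m₂ ≤ @Prod.instMeasurableSpace α β m₁' m₂' :=
  sup_le_sup (MeasurableSpace.comap_mono h₁) (MeasurableSpace.comap_mono h₂)

section Product

variable {𝓧₁ 𝓧₂ Θ₁ Θ₂ : Type*} {𝓐₁ : MeasurableSpace 𝓧₁} {𝓐₂ : MeasurableSpace 𝓧₂}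
  [MeasurableSpace 𝓧₁] [MeasurableSpace 𝓧₂] {P₁ : Θ₁ → Measure 𝓧₁} {P₂ : Θ₂ → Measure 𝓧₂}
  [∀ θ, IsProbabilityMeasure (P₁ θ)] [∀ θ, IsProbabilityMeasure (P₂ θ)] {χ : 𝓧₁ × 𝓧₂ → ℝ}

lemma IsUEZero.integral_prod_left
    (hχ : IsUEZero (fun θ : Θ₁ × Θ₂ => (P₁ θ.1).prod (P₂ θ.2)) χ) (θ₂ : Θ₂) :
    IsUEZero P₁ (fun x₁ => ∫ x₂, χ (x₁, x₂) ∂P₂ θ₂) := by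
  refine ⟨hχ.1.stronglyMeasurable.integral_prod_right'.measurable,
    fun θ₁ => (hχ.2.1 (θ₁, θ₂)).integral_prod_left hχ.1, fun θ₁ => ?_⟩
  rw [← integral_prod χ ((hχ.2.1 (θ₁, θ₂)).integrable one_le_two)]
  exact hχ.2.2 (θ₁, θ₂)

lemma IsUEZero.setIntegral_prod_right
    (hχ : IsUEZero (fun θ : Θ₁ × Θ₂ => (P₁ θ.1).prod (P₂ θ.2)) χ) (h₁ : IsMVEAlgebra P₁ 𝓐₁)
    {A₁ : Set 𝓧₁} (hA₁ : MeasurableSet[𝓐₁] A₁) (θ₁ : Θ₁) :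
    IsUEZero P₂ (fun x₂ => ∫ x₁ in A₁, χ (x₁, x₂) ∂P₁ θ₁) := by
  have hrestrict : ∀ θ₂, MemLp χ 2 (((P₁ θ₁).restrict A₁).prod (P₂ θ₂)) := fun θ₂ => by
    rw [Measure.restrict_prod_eq_prod_univ]
    exact (hχ.2.1 (θ₁, θ₂)).restrict _
  refine ⟨hχ.1.stronglyMeasurable.integral_prod_left'.measurable,
    fun θ₂ => (hrestrict θ₂).integral_prod_right hχ.1, fun θ₂ => ?_⟩
  rw [← integral_integral_swap (f := fun x₁ x₂ => χ (x₁, x₂))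
    ((hrestrict θ₂).integrable one_le_two)]
  exact h₁.setIntegral_eq_zero (hχ.integral_prod_left θ₂) hA₁ θ₁

lemma IsUEZero.setIntegral_prod_eq_zero
    (hχ : IsUEZero (fun θ : Θ₁ × Θ₂ => (P₁ θ.1).prod (P₂ θ.2)) χ) (h₁ : IsMVEAlgebra P₁ 𝓐₁)
    (h₂ : IsMVEAlgebra P₂ 𝓐₂) {A₁ : Set 𝓧₁} (hA₁ : MeasurableSet[𝓐₁] A₁) {A₂ : Set 𝓧₂}
    (hA₂ : MeasurableSet[𝓐₂] A₂) (θ : Θ₁ × Θ₂) :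
    ∫ z in A₁ ×ˢ A₂, χ z ∂(P₁ θ.1).prod (P₂ θ.2) = 0 := by
  have hint : Integrable χ (((P₁ θ.1).restrict A₁).prod ((P₂ θ.2).restrict A₂)) := by
    rw [Measure.prod_restrict]
    exact ((hχ.2.1 θ).integrable one_le_two).restrict
  rw [← Measure.prod_restrict, integral_prod_symm χ hint]
  exact h₂.setIntegral_eq_zero (hχ.setIntegral_prod_right h₁ hA₁ θ.1) hA₂ θ.2

lemma IsUEZero.setIntegral_eq_zero_of_measurableSet_prod
    (hχ : IsUEZero (fun θ : Θ₁ × Θ₂ => (P₁ θ.1).prod (P₂ θ.2)) χ) (h₁ : IsMVEAlgebra P₁ 𝓐₁)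
    (h₂ : IsMVEAlgebra P₂ 𝓐₂) {s : Set (𝓧₁ × 𝓧₂)}
    (hs : MeasurableSet[@Prod.instMeasurableSpace _ _ 𝓐₁ 𝓐₂] s) (θ : Θ₁ × Θ₂) :
    ∫ z in s, χ z ∂(P₁ θ.1).prod (P₂ θ.2) = 0 := by
  refine setIntegral_eq_zero_of_isPiSystem (Prod.instMeasurableSpace_mono h₁.1 h₂.1)
    (@generateFrom_prod _ _ 𝓐₁ 𝓐₂).symm (@isPiSystem_prod _ _ 𝓐₁ 𝓐₂)
    ((hχ.2.1 θ).integrable one_le_two) (hχ.2.2 θ) ?_ hs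
  rintro _ ⟨A₁, hA₁, A₂, hA₂, rfl⟩
  exact hχ.setIntegral_prod_eq_zero h₁ h₂ hA₁ hA₂ θ

end Product

theorem stmt10 {𝓧₁ 𝓧₂ Θ₁ Θ₂ : Type*}
    [m₁ : MeasurableSpace 𝓧₁] [m₂ : MeasurableSpace 𝓧₂]
    (P₁ : Θ₁ → Measure 𝓧₁) (P₂ : Θ₂ → Measure 𝓧₂)
    [∀ θ, IsProbabilityMeasure (P₁ θ)] [∀ θ, IsProbabilityMeasure (P₂ θ)]
    (𝓐₁ : MeasurableSpace 𝓧₁) (𝓐₂ : MeasurableSpace 𝓧₂)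
    (h₁ : @IsMVEAlgebra 𝓧₁ Θ₁ m₁ P₁ 𝓐₁) (h₂ : @IsMVEAlgebra 𝓧₂ Θ₂ m₂ P₂ 𝓐₂) :
    @IsMVEAlgebra (𝓧₁ × 𝓧₂) (Θ₁ × Θ₂) (@Prod.instMeasurableSpace 𝓧₁ 𝓧₂ m₁ m₂)
      (fun p : Θ₁ × Θ₂ => @MeasureTheory.Measure.prod 𝓧₁ 𝓧₂ m₁ m₂ (P₁ p.1) (P₂ p.2))
      (@Prod.instMeasurableSpace 𝓧₁ 𝓧₂ 𝓐₁ 𝓐₂) := by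
  -- `𝓐₁`, `𝓐₂` are local instances too; make instance search find `m₁`, `m₂` again.
  let _ := m₁
  let _ := m₂
  have hle := Prod.instMeasurableSpace_mono h₁.1 h₂.1
  refine ⟨hle, fun g hg hg2 => isUMVUE_of_forall_covariance_eq_zero (hg.mono hle le_rfl) hg2
    fun χ hχ θ => ?_⟩
  have hχ2 := hχ.2.1 θ
  rw [hχ.covariance_eq_integral_mul (hg2 θ)]
  exact integral_mul_eq_zero_of_forall_setIntegral_eq_zero hle hg.stronglyMeasurable
    (hχ2.integrable one_le_two) ((hg2 θ).integrable_mul hχ2)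
    fun s hs => hχ.setIntegral_eq_zero_of_measurableSet_prod h₁ h₂ hs θ
end

section
/- In Lehmann's example, every square-integrable unbiased estimator of zero is of the form U(x) = a·x for some a ∈ ℝ: if χ : {-1,0,1,2,...} → ℝ satisfies Σ_x χ(x) P_θ(X = x) = 0 for all θ ∈ (0,1), then there exists a ∈ ℝ with χ(x) = a·x for all x. -/
open MeasureTheory

/-- The probability mass function in Lehmann's example: `X ∈ {-1,0,1,2,...}` with
`P_θ(X = -1) = θ` and `P_θ(X = k) = (1-θ)² θᵏ` for `k = 0,1,2,...`. -/
noncomputable def lehmannP (θ : ℝ) (x : ℤ) : ℝ :=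
  if x = -1 then θ else if 0 ≤ x then (1 - θ) ^ 2 * θ ^ x.toNat else 0

/-- `χ` is a square-integrable unbiased estimator of zero in Lehmann's example. -/
def IsUEZeroLehmann (χ : ℤ → ℝ) : Prop :=
  ∀ θ ∈ Set.Ioo (0 : ℝ) 1,
    Summable (fun x : ℤ => (χ x) ^ 2 * lehmannP θ x) ∧
    Summable (fun x : ℤ => χ x * lehmannP θ x) ∧
    ∑' x : ℤ, χ x * lehmannP θ x = 0

/-!
Splitting off the atom at `-1`, unbiasedness reads
`χ(-1) θ + (1 - θ)² ∑ χ(n) θⁿ = 0` on `(0, 1)`. Since `∑ n θⁿ = θ / (1 - θ)²`, this says that the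
power series `∑ (χ(n) + χ(-1) n) θⁿ` vanishes on `(0, 1)`; by the identity theorem for power
series all its coefficients vanish, i.e. `χ(x) = -χ(-1) x`.
-/

open Filter Topology FormalMultilinearSeries
open scoped ENNReal

theorem eq_zero_of_frequently_tsum_mul_pow_eq_zero {𝕜 : Type*} [NontriviallyNormedField 𝕜]
    [CompleteSpace 𝕜] {ψ : ℕ → 𝕜} {r : 𝕜} (hr : r ≠ 0) (hsum : Summable fun n ↦ ψ n * r ^ n)
    (hzero : ∃ᶠ z in 𝓝[≠] 0, ∑' n, ψ n * z ^ n = 0) : ψ = 0 := by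
  set p := ofScalars 𝕜 ψ
  have hrad : (‖r‖₊ : ℝ≥0∞) ≤ p.radius := p.le_radius_of_tendsto (l := 0) <| by
    simpa [p, ofScalars_norm, norm_mul, norm_pow] using hsum.tendsto_atTop_zero.norm
  have hpos : 0 < p.radius := (by simpa using hr : (0 : ℝ≥0∞) < ‖r‖₊).trans_le hrad
  have hp : HasFPowerSeriesAt p.sum p 0 := (p.hasFPowerSeriesOnBall hpos).hasFPowerSeriesAt
  have hsum_eq : p.sum = fun z ↦ ∑' n, ψ n * z ^ n := ofScalarsSum_eq_tsum ψ
  have hloc : p.sum =ᶠ[𝓝 0] 0 :=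
    hp.analyticAt.frequently_zero_iff_eventually_zero.1 (by rwa [hsum_eq])
  exact (ofScalars_series_eq_zero 𝕜).1 (hp.eq_zero_of_eventually hloc)

section Lehmann

variable {θ : ℝ} {χ : ℤ → ℝ}

theorem lehmannP_neg_one : lehmannP θ (-1) = θ := if_pos rfl

theorem lehmannP_natCast (n : ℕ) : lehmannP θ n = (1 - θ) ^ 2 * θ ^ n := by
  simp [lehmannP]

theorem lehmannP_of_lt_neg_one {x : ℤ} (hx : x < -1) : lehmannP θ x = 0 := by
  rw [lehmannP, if_neg (by omega), if_neg (by omega)]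

theorem tsum_mul_lehmannP (hs : Summable fun x ↦ χ x * lehmannP θ x) :
    ∑' x, χ x * lehmannP θ x = χ (-1) * θ + (1 - θ) ^ 2 * ∑' n : ℕ, χ n * θ ^ n := by
  have hneg_tsum : ∑' n : ℕ, χ (-(n + 1)) * lehmannP θ (-(n + 1)) = χ (-1) * θ := by
    rw [tsum_eq_single 0 fun n hn ↦ ?_]
    · simp [lehmannP_neg_one]
    · rw [lehmannP_of_lt_neg_one (by omega), mul_zero]
  have hnat : Summable fun n : ℕ ↦ χ n * lehmannP θ n := hs.comp_injective Nat.cast_injective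
  have hneg_summable : Summable fun n : ℕ ↦ χ (-(n + 1)) * lehmannP θ (-(n + 1)) :=
    hs.comp_injective (i := fun n : ℕ ↦ -((n : ℤ) + 1)) fun m n h ↦ by simpa using h
  rw [tsum_of_nat_of_neg_add_one (f := fun x ↦ χ x * lehmannP θ x) hnat hneg_summable, hneg_tsum,
    ← tsum_mul_left, add_comm]
  simp only [lehmannP_natCast, mul_left_comm]

theorem summable_mul_pow_of_summable_mul_lehmannP (hθ : θ ≠ 1)
    (hs : Summable fun x ↦ χ x * lehmannP θ x) : Summable fun n : ℕ ↦ χ n * θ ^ n := by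
  have h := hs.comp_injective Nat.cast_injective
  simp only [Function.comp_def, lehmannP_natCast] at h
  refine (summable_mul_left_iff (pow_ne_zero 2 (sub_ne_zero.2 hθ.symm))).1 ?_
  exact h.congr fun n ↦ by ring

theorem hasSum_mul_pow_eq_zero_of_unbiased (hθ : θ ∈ Set.Ioo 0 1)
    (hs : Summable fun x ↦ χ x * lehmannP θ x) (h0 : ∑' x, χ x * lehmannP θ x = 0) :
    HasSum (fun n : ℕ ↦ (χ n + χ (-1) * n) * θ ^ n) 0 := by
  have h1θ : (1 - θ) ^ 2 ≠ 0 := pow_ne_zero 2 (by linarith [hθ.2])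
  have hχ := (summable_mul_pow_of_summable_mul_lehmannP hθ.2.ne hs).hasSum
  have hgeom := (hasSum_coe_mul_geometric_of_norm_lt_one
    (by rw [Real.norm_of_nonneg hθ.1.le]; exact hθ.2)).mul_left (χ (-1))
  rw [tsum_mul_lehmannP hs] at h0
  convert hχ.add hgeom using 1
  · ext n; ring
  · have hS : ∑' n : ℕ, χ n * θ ^ n = -(χ (-1) * θ) / (1 - θ) ^ 2 := by
      rw [eq_div_iff h1θ]
      linear_combination h0
    rw [hS]
    ring

end Lehmann

theorem stmt11 (χ : ℤ → ℝ)
    (hsum : ∀ θ ∈ Set.Ioo (0 : ℝ) 1, Summable (fun x : ℤ => χ x * lehmannP θ x))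
    (hzero : ∀ θ ∈ Set.Ioo (0 : ℝ) 1, ∑' x : ℤ, χ x * lehmannP θ x = 0) :
    ∃ a : ℝ, ∀ x : ℤ, -1 ≤ x → χ x = a * x := by
  have hseries (θ : ℝ) (hθ : θ ∈ Set.Ioo 0 1) :
      HasSum (fun n : ℕ ↦ (χ n + χ (-1) * n) * θ ^ n) 0 :=
    hasSum_mul_pow_eq_zero_of_unbiased hθ (hsum θ hθ) (hzero θ hθ)
  have hcoeff : (fun n : ℕ ↦ χ n + χ (-1) * n) = 0 := by
    refine eq_zero_of_frequently_tsum_mul_pow_eq_zero (r := 1 / 2) (by norm_num)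
      (hseries _ (by norm_num)).summable ?_
    have hnear : ∀ᶠ θ in 𝓝[>] (0 : ℝ), θ ∈ Set.Ioo 0 1 := Ioo_mem_nhdsGT one_pos
    exact (hnear.frequently.mono fun θ hθ ↦ (hseries θ hθ).tsum_eq).filter_mono
      (nhdsWithin_mono 0 fun x hx ↦ ne_of_gt hx)
  refine ⟨-χ (-1), fun x hx ↦ ?_⟩
  obtain rfl | hx := hx.eq_or_lt
  · simp
  · lift x to ℕ using by omega
    have hx_coeff := congrFun hcoeff x
    simp only [Pi.zero_apply] at hx_coeff
    push_cast
    linarith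
end
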